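/- With f_i as the summands of F, the series Σ_{i=0}^{∞} f_i converges pointwise to F on [0,1], is uniformly bounded, and ∫_0^1 F(x) dx = Σ_{i=0}^{∞} ∫_0^1 f_i(x) dx = (1/24) · Σ_{i=0}^{∞} (5/8)^i = 1/9. -/

import Mathlib

/-!
The partial sums of `∑ fi i x` are controlled by a telescoping potential: a digit `1` at
position `i` turns exactly `fi i x` of it into the sum, a digit `0` only lets it decrease.
Hence `0 ≤ ∑_{i<n} fi i x ≤ 4/3`, and dominated convergence justifies termwise integration.

The integrals `J_k = ∫₀¹ fi k` come from self-similarity. On `[0,1)` the leading digit is `0`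
and `fi (k+1) x = fi k (2x) / 4`; on `[1,2)` the extra leading one gives
`fi (k+1) y = 4 fi (k+1) (y-1)`. So `J_{k+1} = (J_k + ∫₁² fi k) / 8`, which is `5/8 J_k` for
`k ≥ 1`, and `J_1 = 1/24` because `fi 0 y = (2 - y)²` on `[1,2)`.
-/

/-- The `i`-th binary digit of `x ∈ [0,1]` (with `digit x 0` the units digit),
using the finite (terminating) expansion at dyadic rationals. -/
noncomputable def digit (x : ℝ) (i : ℕ) : ℕ := (⌊2 ^ i * x⌋).toNat % 2

/-- The tail sum `Σ_{j=i}^{∞} (1 - x_j)/2^j`. -/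
noncomputable def tail (x : ℝ) (i : ℕ) : ℝ :=
  ∑' j : ℕ, (1 - (digit x (i + j) : ℝ)) / 2 ^ (i + j)

/-- The function `F` from the cellular automaton `T_a`. -/
noncomputable def F (x : ℝ) : ℝ :=
  ∑' i : ℕ, (digit x i : ℝ) * 4 ^ (∑ j ∈ Finset.range i, digit x j) * (tail x i) ^ 2

/-- The `i`-th summand of the series defining `F`. -/
noncomputable def fi (i : ℕ) (x : ℝ) : ℝ :=
  (digit x i : ℝ) * 4 ^ (∑ j ∈ Finset.range i, digit x j) * (tail x i) ^ 2

open Finset Filter Topology MeasureTheory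

lemma digit_le_one (x : ℝ) (i : ℕ) : digit x i ≤ 1 :=
  Nat.le_of_lt_succ (Nat.mod_lt _ two_pos)

lemma digit_eq_zero_or_eq_one (x : ℝ) (i : ℕ) : digit x i = 0 ∨ digit x i = 1 := by
  have := digit_le_one x i
  omega

lemma digit_two_mul (x : ℝ) (i : ℕ) : digit (2 * x) i = digit x (i + 1) := by
  rw [digit, digit, pow_succ, mul_assoc]

lemma digit_sub_one {y : ℝ} (hy : 1 ≤ y) (i : ℕ) :
    digit (y - 1) (i + 1) = digit y (i + 1) := by
  have hfloor : ⌊2 ^ (i + 1) * (y - 1)⌋ = ⌊2 ^ (i + 1) * y⌋ - 2 * 2 ^ i := by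
    rw [← Int.floor_sub_intCast]
    push_cast
    ring_nf
  have hnonneg : 0 ≤ ⌊(2 : ℝ) ^ (i + 1) * (y - 1)⌋ :=
    Int.floor_nonneg.mpr (mul_nonneg (by positivity) (by linarith))
  have hpow : (0 : ℤ) ≤ 2 ^ i := by positivity
  rw [digit, digit, hfloor]
  rw [hfloor] at hnonneg
  omega

lemma digit_zero_of_mem_Ico {x : ℝ} (hx : x ∈ Set.Ico 0 1) : digit x 0 = 0 := by
  rw [digit, pow_zero, one_mul, Int.floor_eq_zero_iff.mpr hx]
  rfl

lemma digit_zero_of_mem_Ico_one_two {y : ℝ} (hy : y ∈ Set.Ico 1 2) : digit y 0 = 1 := by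
  have : ⌊y⌋ = 1 := Int.floor_eq_iff.mpr (by norm_num; exact hy)
  rw [digit, pow_zero, one_mul, this]
  rfl

lemma digit_succ_of_nonneg {x : ℝ} (hx : 0 ≤ x) (k : ℕ) :
    (digit x (k + 1) : ℤ) = ⌊2 ^ (k + 1) * x⌋ - 2 * ⌊2 ^ k * x⌋ := by
  have hle : 2 * ⌊(2 : ℝ) ^ k * x⌋ ≤ ⌊2 ^ (k + 1) * x⌋ := by
    rw [Int.le_floor, pow_succ]
    push_cast
    linarith [Int.floor_le ((2 : ℝ) ^ k * x)]
  have hlt : ⌊(2 : ℝ) ^ (k + 1) * x⌋ < 2 * ⌊2 ^ k * x⌋ + 2 := by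
    rw [Int.floor_lt, pow_succ]
    push_cast
    linarith [Int.lt_floor_add_one ((2 : ℝ) ^ k * x)]
  have hnonneg : 0 ≤ ⌊(2 : ℝ) ^ k * x⌋ := Int.floor_nonneg.mpr (by positivity)
  rw [digit]
  omega

lemma tail_term_nonneg (x : ℝ) (k : ℕ) : 0 ≤ (1 - (digit x k : ℝ)) / 2 ^ k :=
  div_nonneg (by simpa using (Nat.cast_le (α := ℝ)).mpr (digit_le_one x k)) (by positivity)

lemma tail_term_le (x : ℝ) (i j : ℕ) :
    (1 - (digit x (i + j) : ℝ)) / 2 ^ (i + j) ≤ 2 / 2 ^ i / 2 / 2 ^ j := by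
  have h : 2 / 2 ^ i / 2 / 2 ^ j = 1 / (2 : ℝ) ^ (i + j) := by
    rw [pow_add]; field_simp
  rw [h]
  gcongr
  simp

lemma hasSum_tail (x : ℝ) (i : ℕ) :
    HasSum (fun j ↦ (1 - (digit x (i + j) : ℝ)) / 2 ^ (i + j)) (tail x i) :=
  (Summable.of_nonneg_of_le (fun j ↦ tail_term_nonneg x (i + j)) (tail_term_le x i)
    (hasSum_geometric_two' _).summable).hasSum

lemma tail_nonneg (x : ℝ) (i : ℕ) : 0 ≤ tail x i :=
  (hasSum_tail x i).nonneg fun j ↦ tail_term_nonneg x (i + j)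

lemma tail_le (x : ℝ) (i : ℕ) : tail x i ≤ 2 / 2 ^ i :=
  hasSum_le (tail_term_le x i) (hasSum_tail x i) (hasSum_geometric_two' _)

lemma tail_eq_add_tail_succ (x : ℝ) (i : ℕ) :
    tail x i = (1 - (digit x i : ℝ)) / 2 ^ i + tail x (i + 1) := by
  rw [tail, (hasSum_tail x i).summable.tsum_eq_zero_add, tail]
  simp only [add_zero, add_assoc, add_comm 1]

lemma tail_two_mul (x : ℝ) (i : ℕ) : tail (2 * x) i = 2 * tail x (i + 1) := by
  rw [tail, tail, ← tsum_mul_left]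
  refine tsum_congr fun j ↦ ?_
  rw [digit_two_mul, add_right_comm, show (2 : ℝ) ^ (i + 1 + j) = 2 ^ (i + j) * 2 by ring]
  field_simp

lemma tail_sub_one {y : ℝ} (hy : 1 ≤ y) (i : ℕ) : tail (y - 1) (i + 1) = tail y (i + 1) := by
  rw [tail, tail]
  congr! 4 with j
  rw [add_right_comm, digit_sub_one hy]

lemma tendsto_floor_add_one_div_two_pow (x : ℝ) :
    Tendsto (fun n : ℕ ↦ ((⌊2 ^ n * x⌋ : ℝ) + 1) / 2 ^ n) atTop (𝓝 x) := by
  refine tendsto_of_tendsto_of_tendsto_of_le_of_le tendsto_const_nhds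
    (by simpa using (tendsto_pow_atTop_nhds_zero_of_lt_one (by norm_num : (0 : ℝ) ≤ 1 / 2)
      (by norm_num)).const_add x) (fun n ↦ ?_) (fun n ↦ ?_)
  · rw [le_div_iff₀ (by positivity)]
    linarith [Int.lt_floor_add_one ((2 : ℝ) ^ n * x), mul_comm x ((2 : ℝ) ^ n)]
  · rw [div_le_iff₀ (by positivity), add_mul, inv_mul_cancel₀ (by positivity)]
    linarith [Int.floor_le ((2 : ℝ) ^ n * x), mul_comm x ((2 : ℝ) ^ n)]

lemma tail_one_of_nonneg {x : ℝ} (hx : 0 ≤ x) : tail x 1 = ⌊x⌋ + 1 - x := by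
  set v : ℕ → ℝ := fun n ↦ (⌊2 ^ n * x⌋ + 1) / 2 ^ n
  have hpartial (n : ℕ) :
      ∑ j ∈ range n, (1 - (digit x (1 + j) : ℝ)) / 2 ^ (1 + j) = v 0 - v n := by
    induction n with
    | zero => simp
    | succ n ih =>
      have hd : (digit x (n + 1) : ℝ) = ⌊2 ^ (n + 1) * x⌋ - 2 * ⌊2 ^ n * x⌋ := by
        exact_mod_cast digit_succ_of_nonneg hx n
      rw [sum_range_succ, ih, add_comm 1 n, hd]
      simp only [v, pow_succ]
      field_simp
      ring
  have hlim := (hasSum_tail x 1).tendsto_sum_nat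
  simp_rw [hpartial] at hlim
  rw [tendsto_nhds_unique hlim ((tendsto_floor_add_one_div_two_pow x).const_sub (v 0))]
  simp [v]

lemma fi_nonneg (i : ℕ) (x : ℝ) : 0 ≤ fi i x := by
  have := tail_nonneg x i
  unfold fi
  positivity

/-- With `u = 2 ^ i * tail x i ∈ [0, 2]` this is `4 ^ (S - i) * (4 - u ^ 2) / 3`, where `S` is the
number of ones among the first `i` digits. -/
noncomputable def fiPotential (i : ℕ) (x : ℝ) : ℝ :=
  4 ^ (∑ j ∈ range i, digit x j) * (4 / 4 ^ i - tail x i ^ 2) / 3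

lemma tail_sq_le (x : ℝ) (i : ℕ) : tail x i ^ 2 ≤ 4 / 4 ^ i := by
  have h := pow_le_pow_left₀ (tail_nonneg x i) (tail_le x i) 2
  rw [div_pow, ← pow_mul, mul_comm i 2, pow_mul] at h
  norm_num at h
  exact h

lemma fiPotential_nonneg (i : ℕ) (x : ℝ) : 0 ≤ fiPotential i x := by
  have := tail_sq_le x i
  unfold fiPotential
  have : 0 ≤ 4 / 4 ^ i - tail x i ^ 2 := by linarith
  positivity

lemma fi_add_fiPotential_succ_le (i : ℕ) (x : ℝ) :
    fi i x + fiPotential (i + 1) x ≤ fiPotential i x := by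
  have hpow : (4 : ℝ) ^ i = (2 ^ i) ^ 2 := by rw [← pow_mul, mul_comm, pow_mul]; norm_num
  unfold fi fiPotential
  rw [sum_range_succ, tail_eq_add_tail_succ x i, pow_add, pow_succ (4 : ℝ) i, hpow]
  rcases digit_eq_zero_or_eq_one x i with h | h <;> rw [h] <;> push_cast
  · have ht : tail x (i + 1) ≤ 1 / 2 ^ i := by
      have := tail_le x (i + 1)
      rw [pow_succ] at this
      field_simp at this ⊢
      linarith
    have ht0 := tail_nonneg x (i + 1)
    have hdecr : 4 / ((2 ^ i) ^ 2 * 4) - tail x (i + 1) ^ 2 ≤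
        4 / (2 ^ i) ^ 2 - (1 / 2 ^ i + tail x (i + 1)) ^ 2 := by
      rw [show 4 / ((2 : ℝ) ^ i) ^ 2 = 4 * (1 / 2 ^ i) ^ 2 by ring,
        show 4 / (((2 : ℝ) ^ i) ^ 2 * 4) = (1 / 2 ^ i) ^ 2 by field_simp]
      nlinarith
    simp only [zero_mul, sub_zero, pow_zero, mul_one, zero_add]
    gcongr
  · apply le_of_eq
    field_simp
    ring

lemma sum_range_fi_le (x : ℝ) (n : ℕ) : ∑ i ∈ range n, fi i x ≤ 4 / 3 := by
  have h : ∀ n, ∑ i ∈ range n, fi i x + fiPotential n x ≤ fiPotential 0 x := by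
    intro n
    induction n with
    | zero => simp
    | succ n ih =>
      rw [sum_range_succ]
      linarith [fi_add_fiPotential_succ_le n x]
  have h0 : fiPotential 0 x ≤ 4 / 3 := by
    simp only [fiPotential, range_zero, sum_empty, pow_zero]
    nlinarith [sq_nonneg (tail x 0)]
  linarith [h n, fiPotential_nonneg n x]

lemma fi_le (i : ℕ) (x : ℝ) : fi i x ≤ 4 / 3 :=
  (single_le_sum (fun j _ ↦ fi_nonneg j x) (self_mem_range_succ i)).trans (sum_range_fi_le x _)

lemma hasSum_fi (x : ℝ) : HasSum (fun i ↦ fi i x) (F x) :=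
  (summable_of_sum_range_le (fun i ↦ fi_nonneg i x) (sum_range_fi_le x)).hasSum

lemma fi_succ_of_digit_zero {x : ℝ} (hx : digit x 0 = 0) (k : ℕ) :
    fi (k + 1) x = fi k (2 * x) / 4 := by
  simp only [fi, sum_range_succ', hx, add_zero, digit_two_mul, tail_two_mul]
  ring

lemma fi_succ_sub_one {y : ℝ} (hy : y ∈ Set.Ico 1 2) (k : ℕ) :
    fi (k + 1) y = 4 * fi (k + 1) (y - 1) := by
  have hy' : y - 1 ∈ Set.Ico 0 1 := ⟨by linarith [hy.1], by linarith [hy.2]⟩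
  simp only [fi, sum_range_succ', digit_sub_one hy.1, tail_sub_one hy.1,
    digit_zero_of_mem_Ico_one_two hy, digit_zero_of_mem_Ico hy', pow_succ]
  ring

lemma fi_zero_of_mem_Ico {x : ℝ} (hx : x ∈ Set.Ico 0 1) : fi 0 x = 0 := by
  simp [fi, digit_zero_of_mem_Ico hx]

lemma fi_zero_of_mem_Ico_one_two {y : ℝ} (hy : y ∈ Set.Ico 1 2) : fi 0 y = (2 - y) ^ 2 := by
  have hfloor : ⌊y⌋ = 1 := Int.floor_eq_iff.mpr (by norm_num; exact hy)
  simp only [fi, digit_zero_of_mem_Ico_one_two hy, tail_eq_add_tail_succ y 0,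
    tail_one_of_nonneg (by linarith [hy.1] : (0 : ℝ) ≤ y), hfloor]
  norm_num

@[fun_prop]
lemma measurable_digit (i : ℕ) : Measurable (fun x ↦ digit x i) :=
  (measurable_from_top (f := fun n : ℤ ↦ n.toNat % 2)).comp
    (measurable_const.mul measurable_id).floor

lemma measurable_tail (i : ℕ) : Measurable (fun x ↦ tail x i) :=
  Measurable.tsum fun j ↦ by fun_prop

lemma measurable_fi (i : ℕ) : Measurable (fi i) := by
  have := measurable_tail i
  unfold fi
  fun_prop

lemma measurable_F : Measurable F :=
  Measurable.tsum measurable_fi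

lemma intervalIntegrable_of_measurable_of_norm_le {f : ℝ → ℝ} (hf : Measurable f) {C : ℝ}
    (hC : ∀ x, ‖f x‖ ≤ C) (a b : ℝ) : IntervalIntegrable f volume a b :=
  (intervalIntegrable_const (c := C)).mono_fun hf.aestronglyMeasurable
    (ae_of_all _ fun x ↦ (hC x).trans (le_abs_self C))

lemma intervalIntegrable_fi (i : ℕ) (a b : ℝ) : IntervalIntegrable (fi i) volume a b :=
  intervalIntegrable_of_measurable_of_norm_le (measurable_fi i)
    (fun x ↦ (Real.norm_of_nonneg (fi_nonneg i x)).trans_le (fi_le i x)) a b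

lemma F_nonneg (x : ℝ) : 0 ≤ F x :=
  (hasSum_fi x).nonneg fun i ↦ fi_nonneg i x

lemma F_le (x : ℝ) : F x ≤ 4 / 3 :=
  Real.tsum_le_of_sum_range_le (fun i ↦ fi_nonneg i x) (sum_range_fi_le x)

lemma hasSum_intervalIntegral_fi (a b : ℝ) :
    HasSum (fun i ↦ ∫ x in a..b, fi i x) (∫ x in a..b, F x) :=
  intervalIntegral.hasSum_integral_of_dominated_convergence fi
    (fun i ↦ (measurable_fi i).aestronglyMeasurable)
    (fun i ↦ ae_of_all _ fun x _ ↦ (Real.norm_of_nonneg (fi_nonneg i x)).le)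
    (ae_of_all _ fun x _ ↦ (hasSum_fi x).summable)
    (intervalIntegrable_of_measurable_of_norm_le measurable_F
      (fun x ↦ (Real.norm_of_nonneg (F_nonneg x)).trans_le (F_le x)) a b)
    (ae_of_all _ fun x _ ↦ hasSum_fi x)

lemma integral_fi_succ (k : ℕ) :
    ∫ x in (0 : ℝ)..1, fi (k + 1) x =
      ((∫ x in (0 : ℝ)..1, fi k x) + ∫ x in (1 : ℝ)..2, fi k x) / 8 :=
  calc ∫ x in (0 : ℝ)..1, fi (k + 1) x = ∫ x in (0 : ℝ)..1, fi k (2 * x) / 4 :=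
        intervalIntegral.integral_congr_Ioo_of_le zero_le_one fun x hx ↦
          fi_succ_of_digit_zero (digit_zero_of_mem_Ico ⟨hx.1.le, hx.2⟩) k
    _ = (∫ x in (0 : ℝ)..2, fi k x) / 8 := by
        rw [intervalIntegral.integral_div, intervalIntegral.integral_comp_mul_left _ two_ne_zero]
        norm_num
        ring
    _ = _ := by
        rw [intervalIntegral.integral_add_adjacent_intervals (intervalIntegrable_fi k 0 1)
          (intervalIntegrable_fi k 1 2)]

lemma integral_one_two_fi_succ (k : ℕ) :
    ∫ x in (1 : ℝ)..2, fi (k + 1) x = 4 * ∫ x in (0 : ℝ)..1, fi (k + 1) x :=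
  calc ∫ x in (1 : ℝ)..2, fi (k + 1) x = ∫ x in (0 : ℝ)..1, fi (k + 1) (x + 1) := by
        rw [intervalIntegral.integral_comp_add_right]
        norm_num
    _ = ∫ x in (0 : ℝ)..1, 4 * fi (k + 1) x :=
        intervalIntegral.integral_congr_Ioo_of_le zero_le_one fun x hx ↦ by
          simpa using fi_succ_sub_one (y := x + 1) ⟨by linarith [hx.1], by linarith [hx.2]⟩ k
    _ = 4 * ∫ x in (0 : ℝ)..1, fi (k + 1) x := intervalIntegral.integral_const_mul _ _

lemma integral_fi_zero : ∫ x in (0 : ℝ)..1, fi 0 x = 0 := by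
  rw [intervalIntegral.integral_congr_Ioo_of_le zero_le_one (g := fun _ ↦ 0)
    fun x hx ↦ fi_zero_of_mem_Ico ⟨hx.1.le, hx.2⟩]
  simp

lemma integral_one_two_fi_zero : ∫ x in (1 : ℝ)..2, fi 0 x = 1 / 3 := by
  rw [intervalIntegral.integral_congr_Ioo_of_le one_le_two (g := fun x ↦ (2 - x) ^ 2)
    fun x hx ↦ fi_zero_of_mem_Ico_one_two ⟨hx.1.le, hx.2⟩,
    intervalIntegral.integral_comp_sub_left (fun x ↦ x ^ 2)]
  norm_num

lemma integral_fi_succ_eq_mul_pow (k : ℕ) :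
    ∫ x in (0 : ℝ)..1, fi (k + 1) x = 1 / 24 * (5 / 8) ^ k := by
  induction k with
  | zero => rw [integral_fi_succ, integral_fi_zero, integral_one_two_fi_zero]; norm_num
  | succ k ih => rw [integral_fi_succ, integral_one_two_fi_succ, ih]; ring

lemma hasSum_integral_unitInterval_fi :
    HasSum (fun i ↦ ∫ x in (0 : ℝ)..1, fi i x) (1 / 9) := by
  rw [← hasSum_nat_add_iff' 1]
  simp only [integral_fi_succ_eq_mul_pow, sum_range_one, integral_fi_zero, sub_zero]
  rw [show (1 / 9 : ℝ) = 1 / 24 * (1 - 5 / 8)⁻¹ by norm_num]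
  exact (hasSum_geometric_of_lt_one (by norm_num) (by norm_num)).mul_left _

theorem F_termwise_integration :
    (∀ x ∈ Set.Icc (0 : ℝ) 1, HasSum (fun i : ℕ => fi i x) (F x)) ∧
    (∃ C : ℝ, ∀ x ∈ Set.Icc (0 : ℝ) 1, ∀ n : ℕ, |∑ i ∈ Finset.range n, fi i x| ≤ C) ∧
    (∫ x in (0 : ℝ)..1, F x = ∑' i : ℕ, ∫ x in (0 : ℝ)..1, fi i x) ∧
    (∑' i : ℕ, ∫ x in (0 : ℝ)..1, fi i x = (1 / 24) * ∑' i : ℕ, (5 / 8 : ℝ) ^ i) ∧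
    (∫ x in (0 : ℝ)..1, F x = 1 / 9) := by
  have hF := hasSum_intervalIntegral_fi 0 1
  refine ⟨fun x _ ↦ hasSum_fi x, ⟨4 / 3, fun x _ n ↦ ?_⟩, hF.tsum_eq.symm, ?_,
    hF.unique hasSum_integral_unitInterval_fi⟩
  · rw [abs_of_nonneg (sum_nonneg fun i _ ↦ fi_nonneg i x)]
    exact sum_range_fi_le x n
  · rw [hasSum_integral_unitInterval_fi.tsum_eq,
      tsum_geometric_of_lt_one (by norm_num) (by norm_num)]
    norm_num
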